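/- With notation as above (cone C_n in a split quadratic space of dimension 2n over a field of characteristic zero), the map a(c,v) = n̄(v)·N(c)·n̄(v)^{-1} is injective on pairs up to the shift action: if a(c,v) = a(c',v') with c, c' ∈ C_n° and ⟨c,v⟩, ⟨c',v'⟩ defined, then c = c' and v − v' = t c for some scalar t. -/
import Mathlib


open scoped Matrix

section

variable {F : Type*} [Field F] {ι : Type*} [Fintype ι] [DecidableEq ι]

/-- The quadratic form `Q(v) = ½ v J vᵀ` attached to the Gram matrix `J`. -/
def quadForm (J : Matrix ι ι F) (v : ι → F) : F :=
  (2 : F)⁻¹ * (v ⬝ᵥ J.mulVec v)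

/-- The lower unipotent matrix `n̄(v) = [[1,0,0],[−J vᵀ, I, 0],[−Q(v), v, 1]]`. -/
def nbar (J : Matrix ι ι F) (v : ι → F) :
    Matrix (Unit ⊕ ι ⊕ Unit) (Unit ⊕ ι ⊕ Unit) F :=
  Matrix.of fun r c =>
    match r, c with
    | Sum.inl _, Sum.inl _ => 1
    | Sum.inr (Sum.inl i), Sum.inl _ => -(J.mulVec v i)
    | Sum.inr (Sum.inl i), Sum.inr (Sum.inl j) => if i = j then 1 else 0
    | Sum.inr (Sum.inr _), Sum.inl _ => -quadForm J v
    | Sum.inr (Sum.inr _), Sum.inr (Sum.inl j) => v j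
    | Sum.inr (Sum.inr _), Sum.inr (Sum.inr _) => 1
    | _, _ => 0

/-- The nilpotent matrix `N(c) = [[0, c, 0],[0, 0, −J cᵀ],[0,0,0]]`. -/
def Nnil (J : Matrix ι ι F) (c : ι → F) :
    Matrix (Unit ⊕ ι ⊕ Unit) (Unit ⊕ ι ⊕ Unit) F :=
  Matrix.of fun r c' =>
    match r, c' with
    | Sum.inl _, Sum.inr (Sum.inl j) => c j
    | Sum.inr (Sum.inl i), Sum.inr (Sum.inr _) => -(J.mulVec c i)
    | _, _ => 0

/-- The map `a(c,v) = n̄(v) · N(c) · n̄(v)⁻¹` into the Lie algebra `𝔬_{2n+2}`. -/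
noncomputable def aMap (J : Matrix ι ι F) (c v : ι → F) :
    Matrix (Unit ⊕ ι ⊕ Unit) (Unit ⊕ ι ⊕ Unit) F :=
  nbar J v * Nnil J c * (nbar J v)⁻¹

lemma dp_symm (J : Matrix ι ι F) (hJ : J.transpose = J) (v w : ι → F) :
    v ⬝ᵥ J.mulVec w = w ⬝ᵥ J.mulVec v := by
  rw [Matrix.dotProduct_mulVec, ← Matrix.vecMul_transpose, hJ, dotProduct_comm]

lemma nbar_mul [CharZero F] (J : Matrix ι ι F) (hJ : J.transpose = J) (v w : ι → F) :
    nbar J v * nbar J w = nbar J (v + w) := by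
  ext r s
  cases r with
  | inl r =>
    cases s with
    | inl s => simp [Matrix.mul_apply, Fintype.sum_sum_type, nbar]
    | inr s => cases s <;> simp [Matrix.mul_apply, Fintype.sum_sum_type, nbar]
  | inr r =>
    cases r with
    | inl i =>
      cases s with
      | inl s => simp [Matrix.mul_apply, Fintype.sum_sum_type, nbar, Matrix.mulVec_add]; ring
      | inr s => cases s <;> simp [Matrix.mul_apply, Fintype.sum_sum_type, nbar, Finset.sum_ite_eq, Finset.sum_ite_eq']
    | inr r =>
      cases s with
      | inl s =>
        simp only [Matrix.mul_apply, Fintype.sum_sum_type, nbar, Matrix.of_apply,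
          Finset.univ_unique, Finset.sum_singleton]
        have h1 : ∑ j, v j * -(J.mulVec w j) = -(v ⬝ᵥ J.mulVec w) := by
          simp [dotProduct]
        have h2 : (2:F) ≠ 0 := two_ne_zero
        rw [h1, quadForm, quadForm, quadForm, Matrix.mulVec_add, dotProduct_add,
          add_dotProduct, add_dotProduct, dp_symm J hJ w v]
        field_simp
        ring
      | inr s => cases s <;> simp [Matrix.mul_apply, Fintype.sum_sum_type, nbar, quadForm, Matrix.mulVec_add]

lemma nbar_zero (J : Matrix ι ι F) : nbar J 0 = 1 := by
  ext r s
  cases r with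
  | inl r => cases s with
    | inl s => simp [nbar, Matrix.one_apply]
    | inr s => cases s <;> simp [nbar, Matrix.one_apply]
  | inr r => cases r with
    | inl i => cases s with
      | inl s => simp [nbar, Matrix.one_apply]
      | inr s => cases s <;> simp [nbar, Matrix.one_apply]
    | inr r => cases s with
      | inl s => simp [nbar, quadForm, Matrix.one_apply]
      | inr s => cases s <;> simp [nbar, Matrix.one_apply]

lemma nbar_inv [CharZero F] (J : Matrix ι ι F) (hJ : J.transpose = J) (v : ι → F) :
    (nbar J v)⁻¹ = nbar J (-v) := by
  apply Matrix.inv_eq_right_inv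
  rw [nbar_mul J hJ, add_neg_cancel, nbar_zero]

lemma aMap_entry1 [CharZero F] (J : Matrix ι ι F) (hJ : J.transpose = J)
    (c v : ι → F) (j : ι) :
    aMap J c v (Sum.inl ()) (Sum.inr (Sum.inl j)) = c j := by
  rw [aMap, nbar_inv J hJ]
  simp [Matrix.mul_apply, Fintype.sum_sum_type, nbar, Nnil, Finset.sum_ite_eq]

lemma aMap_entry2 [CharZero F] (J : Matrix ι ι F) (hJ : J.transpose = J)
    (c v : ι → F) (i j : ι) :
    aMap J c v (Sum.inr (Sum.inl i)) (Sum.inr (Sum.inl j)) =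
      -(J.mulVec v i) * c j + (J.mulVec c i) * v j := by
  rw [aMap, nbar_inv J hJ]
  simp [Matrix.mul_apply, Fintype.sum_sum_type, nbar, Nnil, Finset.sum_ite_eq,
    Finset.sum_ite_eq']


/-- With the cone `C` in a split nondegenerate quadratic space of
dimension `2n` over an (algebraically closed) field of characteristic zero, the map
`a(c,v) = n̄(v)·N(c)·n̄(v)⁻¹` is injective on pairs up to the shift action: if
`a(c,v) = a(c',v')` with `c, c' ∈ C°`, then `c = c'` and `v − v' = t·c` for some
scalar `t`. -/
theorem stmt_14 [IsAlgClosed F] [CharZero F] (J : Matrix ι ι F)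
    (hJsymm : J.transpose = J)
    (hJnd : ∀ w : ι → F, J.mulVec w = 0 → w = 0)
    (c c' v v' : ι → F)
    (hc : quadForm J c = 0) (hc0 : c ≠ 0)
    (hc' : quadForm J c' = 0) (hc'0 : c' ≠ 0)
    (heq : aMap J c v = aMap J c' v') :
    c = c' ∧ ∃ t : F, v - v' = t • c := by
  have hcc : c = c' := by
    funext j
    have := congrFun (congrFun heq (Sum.inl ())) (Sum.inr (Sum.inl j))
    rwa [aMap_entry1 J hJsymm, aMap_entry1 J hJsymm] at this
  subst hcc
  refine ⟨rfl, ?_⟩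
  have key : ∀ i j, J.mulVec c i * (v j - v' j) = (J.mulVec v i - J.mulVec v' i) * c j := by
    intro i j
    have := congrFun (congrFun heq (Sum.inr (Sum.inl i))) (Sum.inr (Sum.inl j))
    rw [aMap_entry2 J hJsymm, aMap_entry2 J hJsymm] at this
    linear_combination this
  obtain ⟨i0, hi0⟩ : ∃ i, J.mulVec c i ≠ 0 := by
    by_contra h
    push_neg at h
    exact hc0 (hJnd c (funext h))
  refine ⟨(J.mulVec v i0 - J.mulVec v' i0) / J.mulVec c i0, ?_⟩
  funext j
  have := key i0 j
  simp only [Pi.sub_apply, Pi.smul_apply, smul_eq_mul]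
  field_simp
  linear_combination this


end
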